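/- arXiv:2204.04146 — 6 statements merged into one kernel-verified Lean document; each statement's English description precedes it below -/
import Mathlib

section
/- Let Δt, Δx, ε > 0, L > 0, and suppose 2εΔt/Δx² + 4LΔt/Δx ≤ 1. Define the operator M on sequences u : ℤ → ℝ by M(u)_i = u_i + εΔt(u_{i+1} − 2u_i + u_{i-1})/Δx² − Δt·H((u_i − u_{i-1})/Δx, (u_{i+1} − u_i)/Δx), where H(p,q) = max(max(p,0)², min(q,0)²). If u, v : ℤ → ℝ are such that |u_{j+1} − u_j| ≤ LΔx and |v_{j+1} − v_j| ≤ LΔx for all j, and u_j ≤ v_j for j ∈ {i−1, i, i+1}, then M(u)_i ≤ M(v)_i. -/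
noncomputable def Hnum (p q : ℝ) : ℝ := max ((max p 0) ^ 2) ((min q 0) ^ 2)

noncomputable def Mop (ε Δt Δx : ℝ) (u : ℤ → ℝ) (i : ℤ) : ℝ :=
  u i + ε * Δt * (u (i + 1) - 2 * u i + u (i - 1)) / Δx ^ 2
    - Δt * Hnum ((u i - u (i - 1)) / Δx) ((u (i + 1) - u i) / Δx)

lemma Hnum_anti (p p' q q' : ℝ) (hp : p' ≤ p) (hq : q ≤ q') : Hnum p' q' ≤ Hnum p q := by
  unfold Hnum
  have h1 : max p' 0 ≤ max p 0 := max_le_max hp le_rfl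
  have h2 : min q 0 ≤ min q' 0 := min_le_min hq le_rfl
  have hA : (max p' 0) ^ 2 ≤ (max p 0) ^ 2 := by
    nlinarith [le_max_right p' (0:ℝ), le_max_right p (0:ℝ)]
  have hB : (min q' 0) ^ 2 ≤ (min q 0) ^ 2 := by
    nlinarith [min_le_right q (0:ℝ), min_le_right q' (0:ℝ)]
  exact max_le_max hA hB

lemma Hnum_lip (L p q d : ℝ) (hL0 : 0 ≤ L) (hd : 0 ≤ d)
    (hpL : p + d ≤ L) (hqL : -L ≤ q - d) :
    Hnum (p + d) (q - d) ≤ Hnum p q + 2 * L * d := by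
  unfold Hnum
  have hs0 : (0:ℝ) ≤ max p 0 := le_max_right _ _
  have hs0' : (0:ℝ) ≤ max (p + d) 0 := le_max_right _ _
  have hs1 : max p 0 ≤ max (p + d) 0 := max_le_max (by linarith) le_rfl
  have hs2 : max (p + d) 0 ≤ L := max_le hpL hL0
  have hs3 : max (p + d) 0 ≤ max p 0 + d := max_le (by linarith [le_max_left p (0:ℝ)]) (by linarith)
  have hA : (max (p + d) 0) ^ 2 ≤ (max p 0) ^ 2 + 2 * L * d := by nlinarith
  have ht0 : min q 0 ≤ 0 := min_le_right _ _
  have ht0' : min (q - d) 0 ≤ 0 := min_le_right _ _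
  have ht1 : min (q - d) 0 ≤ min q 0 := min_le_min (by linarith) le_rfl
  have ht2 : -L ≤ min (q - d) 0 := le_min hqL (by linarith)
  have ht3 : min q 0 - d ≤ min (q - d) 0 := le_min (by linarith [min_le_left q (0:ℝ)]) (by linarith)
  have hB : (min (q - d) 0) ^ 2 ≤ (min q 0) ^ 2 + 2 * L * d := by nlinarith
  exact max_le (le_trans hA (by gcongr; exact le_max_left _ _))
    (le_trans hB (by gcongr; exact le_max_right _ _))

/-- monotonicity of the discrete operator M under the CFL condition. -/
theorem Mop_monotone (ε Δt Δx L : ℝ) (hε : 0 < ε) (hΔt : 0 < Δt) (hΔx : 0 < Δx)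
    (hL : 0 < L) (hCFL : 2 * ε * Δt / Δx ^ 2 + 4 * L * Δt / Δx ≤ 1)
    (u v : ℤ → ℝ)
    (hu : ∀ j : ℤ, |u (j + 1) - u j| ≤ L * Δx)
    (hv : ∀ j : ℤ, |v (j + 1) - v j| ≤ L * Δx)
    (i : ℤ) (hle : ∀ j ∈ ({i - 1, i, i + 1} : Set ℤ), u j ≤ v j) :
    Mop ε Δt Δx u i ≤ Mop ε Δt Δx v i := by
  have hm : u (i - 1) ≤ v (i - 1) := hle _ (by simp)
  have hc : u i ≤ v i := hle _ (by simp)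
  have hp : u (i + 1) ≤ v (i + 1) := hle _ (by simp)
  have hidx : i - 1 + 1 = i := by ring
  have hv1 : |v i - v (i - 1)| ≤ L * Δx := by have := hv (i - 1); rwa [hidx] at this
  have hv2 : |v (i + 1) - v i| ≤ L * Δx := hv i
  set a := u (i - 1); set b := u i; set c := u (i + 1)
  set a' := v (i - 1); set b' := v i; set c' := v (i + 1)
  have hΔx2 : (0:ℝ) < Δx ^ 2 := by positivity
  -- step 1 : lower neighbors
  have step1 : Hnum ((b - a') / Δx) ((c' - b) / Δx) ≤ Hnum ((b - a) / Δx) ((c - b) / Δx) := by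
    apply Hnum_anti
    · exact div_le_div_of_nonneg_right (by linarith) hΔx.le
    · exact div_le_div_of_nonneg_right (by linarith) hΔx.le
  -- step 2 : center point, Lipschitz estimate
  set d : ℝ := (b' - b) / Δx with hd_def
  have hd0 : 0 ≤ d := div_nonneg (by linarith) hΔx.le
  have step2 : Hnum ((b' - a') / Δx) ((c' - b') / Δx)
      ≤ Hnum ((b - a') / Δx) ((c' - b) / Δx) + 2 * L * d := by
    have e1 : (b' - a') / Δx = (b - a') / Δx + d := by rw [hd_def]; ring
    have e2 : (c' - b') / Δx = (c' - b) / Δx - d := by rw [hd_def]; ring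
    rw [e1, e2]
    apply Hnum_lip L _ _ _ hL.le hd0
    · rw [← e1]
      have h : b' - a' ≤ L * Δx := by
        have := abs_le.mp hv1; linarith [this.1, this.2]
      calc (b' - a') / Δx ≤ (L * Δx) / Δx := div_le_div_of_nonneg_right h hΔx.le
        _ = L := by field_simp
    · rw [← e2]
      have h : -(L * Δx) ≤ c' - b' := by
        have := abs_le.mp hv2; linarith [this.1, this.2]
      calc -L = -(L * Δx) / Δx := by field_simp
        _ ≤ (c' - b') / Δx := div_le_div_of_nonneg_right h hΔx.le
  have hH : Hnum ((b' - a') / Δx) ((c' - b') / Δx)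
      ≤ Hnum ((b - a) / Δx) ((c - b) / Δx) + 2 * L * d := by linarith
  -- combine everything linearly
  have F2 : Δt * Hnum ((b' - a') / Δx) ((c' - b') / Δx)
      ≤ Δt * Hnum ((b - a) / Δx) ((c - b) / Δx) + (b' - b) * (2 * L * Δt / Δx) := by
    have h1 := mul_le_mul_of_nonneg_left hH hΔt.le
    have e : Δt * (Hnum ((b - a) / Δx) ((c - b) / Δx) + 2 * L * d)
        = Δt * Hnum ((b - a) / Δx) ((c - b) / Δx) + (b' - b) * (2 * L * Δt / Δx) := by
      rw [hd_def]; ring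
    linarith
  have F4 : ε * Δt * (c' - 2 * b' + a') / Δx ^ 2 - ε * Δt * (c - 2 * b + a) / Δx ^ 2
      = ε * Δt * ((c' - c) + (a' - a)) / Δx ^ 2 - (b' - b) * (2 * ε * Δt / Δx ^ 2) := by
    ring
  have F5 : 0 ≤ ε * Δt * ((c' - c) + (a' - a)) / Δx ^ 2 :=
    div_nonneg (mul_nonneg (by positivity) (by linarith)) hΔx2.le
  have F6 : (b' - b) * (2 * ε * Δt / Δx ^ 2 + 4 * L * Δt / Δx) ≤ b' - b := by
    nlinarith [mul_nonneg (sub_nonneg.mpr hc)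
      (by positivity : (0:ℝ) ≤ 2 * ε * Δt / Δx ^ 2 + 4 * L * Δt / Δx)]
  have F7 : (b' - b) * (2 * L * Δt / Δx) ≤ (b' - b) * (4 * L * Δt / Δx) := by
    apply mul_le_mul_of_nonneg_left _ (by linarith)
    apply div_le_div_of_nonneg_right _ hΔx.le
    nlinarith [mul_pos hL hΔt]
  have F8 : (b' - b) * (2 * ε * Δt / Δx ^ 2 + 4 * L * Δt / Δx)
      = (b' - b) * (2 * ε * Δt / Δx ^ 2) + (b' - b) * (4 * L * Δt / Δx) := by ring
  unfold Mop
  linarith [F2, F4, F5, F6, F7, F8]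
end

section
/- Under the CFL condition 2εΔt/Δx² + 4LΔt/Δx ≤ 1, if u : ℤ → ℝ satisfies |u_i − u_{i-1}| ≤ LΔx for all i ∈ ℤ, then the sequence M(u) defined by M(u)_i = u_i + εΔt(u_{i+1} − 2u_i + u_{i-1})/Δx² − Δt·H((u_i − u_{i-1})/Δx, (u_{i+1} − u_i)/Δx) also satisfies |M(u)_i − M(u)_{i-1}| ≤ LΔx for all i ∈ ℤ. -/
noncomputable def Gsten (ε Δt Δx a b c : ℝ) : ℝ :=
  b + ε * Δt * (c - 2 * b + a) / Δx ^ 2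
    - Δt * Hnum ((b - a) / Δx) ((c - b) / Δx)

lemma Mop_eq_Gsten (ε Δt Δx : ℝ) (u : ℤ → ℝ) (i : ℤ) :
    Mop ε Δt Δx u i = Gsten ε Δt Δx (u (i - 1)) (u i) (u (i + 1)) := rfl

lemma Hnum_mono (p₁ p₂ q₁ q₂ : ℝ) (hp : p₁ ≤ p₂) (hq : q₂ ≤ q₁) :
    Hnum p₁ q₁ ≤ Hnum p₂ q₂ := by
  unfold Hnum
  apply max_le_max
  · have h1 : max p₁ 0 ≤ max p₂ 0 := max_le_max hp le_rfl
    have h2 : (0:ℝ) ≤ max p₁ 0 := le_max_right _ _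
    nlinarith
  · have h1 : min q₂ 0 ≤ min q₁ 0 := min_le_min hq le_rfl
    have h2 : min q₁ 0 ≤ 0 := min_le_right _ _
    nlinarith

lemma Hnum_lip_s4 (L p₁ p₂ q₁ q₂ : ℝ) (hL : 0 ≤ L) (hp : p₁ ≤ p₂) (hpL : p₂ ≤ L)
    (hq : q₂ ≤ q₁) (hqL : -L ≤ q₂) :
    Hnum p₂ q₂ ≤ Hnum p₁ q₁ + 2 * L * (p₂ - p₁) + 2 * L * (q₁ - q₂) := by
  unfold Hnum
  apply max_le
  · have h1 : max p₁ 0 ≤ max p₂ 0 := max_le_max hp le_rfl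
    have h2 : (0:ℝ) ≤ max p₁ 0 := le_max_right _ _
    have h3 : max p₂ 0 ≤ L := max_le hpL hL
    have h4 : max p₂ 0 - max p₁ 0 ≤ p₂ - p₁ := by
      rcases le_or_gt p₂ 0 with h | h
      · rw [max_eq_right h, max_eq_right (hp.trans h)]; linarith
      · rw [max_eq_left h.le]
        rcases le_or_gt p₁ 0 with h' | h'
        · rw [max_eq_right h']; linarith
        · rw [max_eq_left h'.le]
    have h5 : (max p₁ 0)^2 ≤ max ((max p₁ 0) ^ 2) ((min q₁ 0) ^ 2) := le_max_left _ _
    have h6 : (0:ℝ) ≤ q₁ - q₂ := by linarith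
    nlinarith
  · have h1 : min q₂ 0 ≤ min q₁ 0 := min_le_min hq le_rfl
    have h2 : min q₁ 0 ≤ 0 := min_le_right _ _
    have h3 : -L ≤ min q₂ 0 := le_min hqL (by linarith)
    have h4 : min q₁ 0 - min q₂ 0 ≤ q₁ - q₂ := by
      rcases le_or_gt 0 q₂ with h | h
      · rw [min_eq_right h, min_eq_right (h.trans hq)]; linarith
      · rw [min_eq_left h.le]
        rcases le_or_gt 0 q₁ with h' | h'
        · rw [min_eq_right h']; linarith
        · rw [min_eq_left h'.le]
    have h5 : (min q₁ 0)^2 ≤ max ((max p₁ 0) ^ 2) ((min q₁ 0) ^ 2) := le_max_right _ _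
    have h6 : (0:ℝ) ≤ p₂ - p₁ := by linarith
    nlinarith

lemma Gsten_mono (ε Δt Δx L : ℝ) (hε : 0 ≤ ε) (hΔt : 0 < Δt) (hΔx : 0 < Δx) (hL : 0 < L)
    (hCFL : 2 * ε * Δt / Δx ^ 2 + 4 * L * Δt / Δx ≤ 1)
    (a b c a' b' c' : ℝ) (ha : a ≤ a') (hb : b ≤ b') (hc : c ≤ c')
    (hy1 : b' - a' ≤ L * Δx) (hy2 : b' - c' ≤ L * Δx) :
    Gsten ε Δt Δx a b c ≤ Gsten ε Δt Δx a' b' c' := by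
  have hΔx2 : (0:ℝ) < Δx ^ 2 := by positivity
  have step1 : Gsten ε Δt Δx a b c ≤ Gsten ε Δt Δx a' b c := by
    have hH : Hnum ((b - a') / Δx) ((c - b) / Δx) ≤ Hnum ((b - a) / Δx) ((c - b) / Δx) :=
      Hnum_mono _ _ _ _ (by apply div_le_div_of_nonneg_right (by linarith) hΔx.le) le_rfl
    have hd : 0 ≤ ε * Δt * (a' - a) / Δx ^ 2 :=
      div_nonneg (mul_nonneg (mul_nonneg hε hΔt.le) (by linarith)) hΔx2.le
    have e : Gsten ε Δt Δx a' b c - Gsten ε Δt Δx a b c =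
        ε * Δt * (a' - a) / Δx ^ 2
        + Δt * (Hnum ((b - a) / Δx) ((c - b) / Δx) - Hnum ((b - a') / Δx) ((c - b) / Δx)) := by
      unfold Gsten; ring
    nlinarith [mul_le_mul_of_nonneg_left hH hΔt.le]
  have step2 : Gsten ε Δt Δx a' b c ≤ Gsten ε Δt Δx a' b c' := by
    have hH : Hnum ((b - a') / Δx) ((c' - b) / Δx) ≤ Hnum ((b - a') / Δx) ((c - b) / Δx) :=
      Hnum_mono _ _ _ _ le_rfl (by apply div_le_div_of_nonneg_right (by linarith) hΔx.le)
    have hd : 0 ≤ ε * Δt * (c' - c) / Δx ^ 2 :=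
      div_nonneg (mul_nonneg (mul_nonneg hε hΔt.le) (by linarith)) hΔx2.le
    have e : Gsten ε Δt Δx a' b c' - Gsten ε Δt Δx a' b c =
        ε * Δt * (c' - c) / Δx ^ 2
        + Δt * (Hnum ((b - a') / Δx) ((c - b) / Δx) - Hnum ((b - a') / Δx) ((c' - b) / Δx)) := by
      unfold Gsten; ring
    nlinarith [mul_le_mul_of_nonneg_left hH hΔt.le]
  have step3 : Gsten ε Δt Δx a' b c' ≤ Gsten ε Δt Δx a' b' c' := by
    set δ := b' - b with hδdef
    have hδ : 0 ≤ δ := by simp [hδdef]; linarith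
    have hp : (b - a') / Δx ≤ (b' - a') / Δx :=
      div_le_div_of_nonneg_right (by linarith) hΔx.le
    have hpL : (b' - a') / Δx ≤ L := by
      rw [div_le_iff₀ hΔx]; linarith
    have hq : (c' - b') / Δx ≤ (c' - b) / Δx :=
      div_le_div_of_nonneg_right (by linarith) hΔx.le
    have hqL : -L ≤ (c' - b') / Δx := by
      rw [le_div_iff₀ hΔx]; linarith
    have hH := Hnum_lip_s4 L ((b - a') / Δx) ((b' - a') / Δx) ((c' - b) / Δx) ((c' - b') / Δx)
      hL.le hp hpL hq hqL
    have e1 : (b' - a') / Δx - (b - a') / Δx = δ / Δx := by rw [hδdef]; ring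
    have e2 : (c' - b) / Δx - (c' - b') / Δx = δ / Δx := by rw [hδdef]; ring
    rw [e1, e2] at hH
    have hH' : Δt * Hnum ((b' - a') / Δx) ((c' - b') / Δx)
        ≤ Δt * (Hnum ((b - a') / Δx) ((c' - b) / Δx) + 4 * L * (δ / Δx)) := by
      apply mul_le_mul_of_nonneg_left _ hΔt.le
      linarith
    have e : Gsten ε Δt Δx a' b' c' - Gsten ε Δt Δx a' b c' =
        δ - 2 * (ε * Δt * δ / Δx ^ 2)
        - Δt * (Hnum ((b' - a') / Δx) ((c' - b') / Δx)
            - Hnum ((b - a') / Δx) ((c' - b) / Δx)) := by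
      unfold Gsten; rw [hδdef]; ring
    have hCFL' : δ * (2 * ε * Δt / Δx ^ 2) + δ * (4 * L * Δt / Δx) ≤ δ := by
      have := mul_le_mul_of_nonneg_left hCFL hδ
      nlinarith
    have m1 : δ * (2 * ε * Δt / Δx ^ 2) = 2 * (ε * Δt * δ / Δx ^ 2) := by ring
    have m2 : δ * (4 * L * Δt / Δx) = Δt * (4 * L * (δ / Δx)) := by ring
    rw [m1, m2] at hCFL'
    linarith
  linarith

lemma Gsten_add_const (ε Δt Δx a b c k : ℝ) :
    Gsten ε Δt Δx (a + k) (b + k) (c + k) = Gsten ε Δt Δx a b c + k := by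
  unfold Gsten
  rw [show b + k - (a + k) = b - a by ring, show c + k - (b + k) = c - b by ring]
  ring

/-- propagation of the discrete L-Lipschitz bound by the scheme under CFL. -/
theorem Mop_lipschitz_propagation (ε Δt Δx L : ℝ) (hε : 0 ≤ ε) (hΔt : 0 < Δt)
    (hΔx : 0 < Δx) (hL : 0 < L)
    (hCFL : 2 * ε * Δt / Δx ^ 2 + 4 * L * Δt / Δx ≤ 1)
    (u : ℤ → ℝ) (hu : ∀ i : ℤ, |u i - u (i - 1)| ≤ L * Δx) :
    ∀ i : ℤ, |Mop ε Δt Δx u i - Mop ε Δt Δx u (i - 1)| ≤ L * Δx := by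
  intro i
  have h1 := abs_le.mp (hu (i - 1))
  have h2 := abs_le.mp (hu i)
  have h3 := abs_le.mp (hu (i + 1))
  rw [show i - 1 - 1 = i - 2 by ring] at h1
  rw [show i + 1 - 1 = i by ring] at h3
  have eM : Mop ε Δt Δx u (i - 1) = Gsten ε Δt Δx (u (i - 2)) (u (i - 1)) (u i) := by
    rw [Mop_eq_Gsten, show i - 1 - 1 = i - 2 by ring, show i - 1 + 1 = i by ring]
  rw [abs_le]
  constructor
  · -- lower bound : Mop u (i-1) - L*Δx ≤ Mop u i
    have hmono := Gsten_mono ε Δt Δx L hε hΔt hΔx hL hCFL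
      (u (i - 2) + -(L * Δx)) (u (i - 1) + -(L * Δx)) (u i + -(L * Δx))
      (u (i - 1)) (u i) (u (i + 1))
      (by linarith) (by linarith) (by linarith) (by linarith) (by linarith)
    rw [Gsten_add_const] at hmono
    rw [Mop_eq_Gsten, eM]
    linarith
  · -- upper bound : Mop u i ≤ Mop u (i-1) + L*Δx
    have hmono := Gsten_mono ε Δt Δx L hε hΔt hΔx hL hCFL
      (u (i - 1)) (u i) (u (i + 1))
      (u (i - 2) + L * Δx) (u (i - 1) + L * Δx) (u i + L * Δx)
      (by linarith) (by linarith) (by linarith) (by linarith) (by linarith)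
    rw [Gsten_add_const] at hmono
    rw [Mop_eq_Gsten, eM]
    linarith
end

section
/- Under the CFL condition 2εΔt/Δx² + 4LΔt/Δx ≤ 1, if u, v : ℤ → ℝ both satisfy the discrete L-Lipschitz bound |u_i − u_{i-1}| ≤ LΔx, |v_i − v_{i-1}| ≤ LΔx for all i, and u − v is bounded, then M(u) − M(v) is bounded and sup_i |M(u)_i − M(v)_i| ≤ sup_i |u_i − v_i|, where M(u)_i = u_i + εΔt(u_{i+1} − 2u_i + u_{i-1})/Δx² − Δt·H((u_i − u_{i-1})/Δx, (u_{i+1} − u_i)/Δx). -/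
lemma Hnum_diff_p {L p p' : ℝ} (q : ℝ) (hL : 0 ≤ L) (hp : |p| ≤ L) (hp' : |p'| ≤ L) :
    Hnum p q - Hnum p' q ≤ 2 * L * max (p - p') 0 := by
  unfold Hnum
  rcases le_total p p' with h | h
  · have h1 : max p 0 ≤ max p' 0 := max_le_max h le_rfl
    have h2 : (max p 0) ^ 2 ≤ (max p' 0) ^ 2 := by
      have := le_max_right p 0
      nlinarith [le_max_right p' (0:ℝ)]
    have h3 : max ((max p 0) ^ 2) ((min q 0) ^ 2) ≤ max ((max p' 0) ^ 2) ((min q 0) ^ 2) :=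
      max_le_max h2 le_rfl
    have h4 : (0:ℝ) ≤ 2 * L * max (p - p') 0 := by positivity
    linarith
  · have hm : max (p - p') 0 = p - p' := max_eq_left (by linarith)
    rw [hm]
    set m := max p 0 with hmdef
    set m' := max p' 0 with hm'def
    have hmm' : m' ≤ m := max_le_max h le_rfl
    have hm0 : (0:ℝ) ≤ m' := le_max_right _ _
    have hmL : m ≤ L := max_le (le_trans (le_abs_self p) hp) hL
    have hdiff : m - m' ≤ p - p' := by
      rcases le_total p 0 with hp0 | hp0
      · have : m = 0 := max_eq_right hp0
        have : m - m' ≤ 0 := by simp [this, hm0]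
        linarith
      · have hm1 : m = p := max_eq_left hp0
        have : p' ≤ m' := le_max_left _ _
        linarith
    have hd : m ^ 2 - m' ^ 2 ≤ 2 * L * (p - p') := by nlinarith
    have h5 : max (m ^ 2) ((min q 0) ^ 2) ≤ max (m' ^ 2) ((min q 0) ^ 2) + (m ^ 2 - m' ^ 2) := by
      apply max_le
      · have : m' ^ 2 ≤ max (m' ^ 2) ((min q 0) ^ 2) := le_max_left _ _
        linarith
      · have h6 : (min q 0) ^ 2 ≤ max (m' ^ 2) ((min q 0) ^ 2) := le_max_right _ _
        nlinarith
    linarith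

lemma Hnum_diff_q {L q q' : ℝ} (p : ℝ) (hL : 0 ≤ L) (hq : |q| ≤ L) (hq' : |q'| ≤ L) :
    Hnum p q - Hnum p q' ≤ 2 * L * max (q' - q) 0 := by
  unfold Hnum
  rcases le_total q' q with h | h
  · have hm : max (q' - q) 0 = 0 := max_eq_right (by linarith)
    rw [hm]
    have h1 : min q' 0 ≤ min q 0 := min_le_min h le_rfl
    have h2 : min q 0 ≤ 0 := min_le_right _ _
    have h3 : (min q 0) ^ 2 ≤ (min q' 0) ^ 2 := by nlinarith
    have h4 : max ((max p 0) ^ 2) ((min q 0) ^ 2) ≤ max ((max p 0) ^ 2) ((min q' 0) ^ 2) :=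
      max_le_max le_rfl h3
    linarith
  · have hm : max (q' - q) 0 = q' - q := max_eq_left (by linarith)
    rw [hm]
    set m := min q 0 with hmdef
    set m' := min q' 0 with hm'def
    have hmm' : m ≤ m' := min_le_min h le_rfl
    have hm0 : m' ≤ 0 := min_le_right _ _
    have hmL : -L ≤ m := le_min (neg_le_of_abs_le hq) (by linarith)
    have hdiff : m' - m ≤ q' - q := by
      rcases le_total 0 q with hq0 | hq0
      · have : m = 0 := min_eq_right hq0
        have hq'0 : m' - m ≤ 0 := by simp [this, hm0]
        linarith
      · have hm1 : m = q := min_eq_left hq0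
        have : m' ≤ q' := min_le_left _ _
        linarith
    have hd : m ^ 2 - m' ^ 2 ≤ 2 * L * (q' - q) := by nlinarith
    have h5 : max ((max p 0) ^ 2) (m ^ 2) ≤ max ((max p 0) ^ 2) (m' ^ 2) + (m ^ 2 - m' ^ 2) := by
      apply max_le
      · have h6 : (max p 0) ^ 2 ≤ max ((max p 0) ^ 2) (m' ^ 2) := le_max_left _ _
        nlinarith [sq_nonneg m, sq_nonneg m']
      · have : m' ^ 2 ≤ max ((max p 0) ^ 2) (m' ^ 2) := le_max_right _ _
        linarith
    linarith

lemma Hnum_diff_le {L p p' q q' : ℝ} (hL : 0 ≤ L)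
    (hp : |p| ≤ L) (hp' : |p'| ≤ L) (hq : |q| ≤ L) (hq' : |q'| ≤ L) :
    Hnum p q - Hnum p' q' ≤ 2 * L * max (p - p') 0 + 2 * L * max (q' - q) 0 := by
  have h1 := Hnum_diff_p q hL hp hp'
  have h2 := Hnum_diff_q p' hL hq hq'
  linarith

set_option maxHeartbeats 1000000 in
/-- nonexpansiveness in ℓ∞ of the monotone discrete operator under CFL:
if u − v is bounded by C then so is M(u) − M(v), with the same bound. -/
theorem Mop_nonexpansive (ε Δt Δx L : ℝ) (hε : 0 ≤ ε) (hΔt : 0 < Δt) (hΔx : 0 < Δx)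
    (hL : 0 < L) (hCFL : 2 * ε * Δt / Δx ^ 2 + 4 * L * Δt / Δx ≤ 1)
    (u v : ℤ → ℝ)
    (hu : ∀ i : ℤ, |u i - u (i - 1)| ≤ L * Δx)
    (hv : ∀ i : ℤ, |v i - v (i - 1)| ≤ L * Δx)
    (C : ℝ) (hC : ∀ i : ℤ, |u i - v i| ≤ C) :
    ∀ i : ℤ, |Mop ε Δt Δx u i - Mop ε Δt Δx v i| ≤ C := by
  intro i
  set pu := (u i - u (i - 1)) / Δx with hpu_def
  set qu := (u (i + 1) - u i) / Δx with hqu_def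
  set pv := (v i - v (i - 1)) / Δx with hpv_def
  set qv := (v (i + 1) - v i) / Δx with hqv_def
  have habs : ∀ x : ℝ, |x| ≤ L * Δx → |x / Δx| ≤ L := by
    intro x hx
    rw [abs_div, abs_of_pos hΔx, div_le_iff₀ hΔx]
    exact hx
  have hpu : |pu| ≤ L := habs _ (hu i)
  have hqu : |qu| ≤ L := habs _ (by simpa using hu (i + 1))
  have hpv : |pv| ≤ L := habs _ (hv i)
  have hqv : |qv| ≤ L := habs _ (by simpa using hv (i + 1))
  set a : ℤ → ℝ := fun j => u j - v j with ha_def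
  have hai : |a i| ≤ C := hC i
  have haip : a (i + 1) ≤ C := (abs_le.1 (hC (i + 1))).2
  have haim : a (i - 1) ≤ C := (abs_le.1 (hC (i - 1))).2
  have haip' : -C ≤ a (i + 1) := (abs_le.1 (hC (i + 1))).1
  have haim' : -C ≤ a (i - 1) := (abs_le.1 (hC (i - 1))).1
  have haiu : a i ≤ C := (abs_le.1 hai).2
  have haid : -C ≤ a i := (abs_le.1 hai).1
  set K := 2 * ε * Δt / Δx ^ 2 + 4 * L * Δt / Δx with hK_def
  have hK0 : 0 ≤ K := by positivity
  -- expression for the difference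
  have hE : Mop ε Δt Δx u i - Mop ε Δt Δx v i =
      a i + ε * Δt * (a (i + 1) - 2 * a i + a (i - 1)) / Δx ^ 2
        - Δt * (Hnum pu qu - Hnum pv qv) := by
    simp only [Mop, ha_def]
    ring
  clear_value pu qu pv qv a K
  rw [abs_le]
  constructor
  · -- lower bound: -C ≤ E
    have hkey : Hnum pu qu - Hnum pv qv ≤ 2 * L * max (pu - pv) 0 + 2 * L * max (qv - qu) 0 :=
      Hnum_diff_le hL.le hpu hpv hqu hqv
    have h1 : max (pu - pv) 0 ≤ (a i + C) / Δx := by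
      apply max_le
      · rw [hpu_def, hpv_def]
        rw [div_sub_div_same, div_le_div_iff₀ hΔx hΔx]
        have : u i - u (i - 1) - (v i - v (i - 1)) = a i - a (i - 1) := by
          simp only [ha_def]; ring
        rw [this]
        nlinarith
      · exact div_nonneg (by linarith) hΔx.le
    have h2 : max (qv - qu) 0 ≤ (a i + C) / Δx := by
      apply max_le
      · rw [hqu_def, hqv_def]
        rw [div_sub_div_same, div_le_div_iff₀ hΔx hΔx]
        have : v (i + 1) - v i - (u (i + 1) - u i) = a i - a (i + 1) := by
          simp only [ha_def]; ring
        rw [this]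
        nlinarith
      · exact div_nonneg (by linarith) hΔx.le
    have hH : Δt * (Hnum pu qu - Hnum pv qv) ≤ Δt * (4 * L * ((a i + C) / Δx)) := by
      apply mul_le_mul_of_nonneg_left _ hΔt.le
      calc Hnum pu qu - Hnum pv qv
          ≤ 2 * L * max (pu - pv) 0 + 2 * L * max (qv - qu) 0 := hkey
        _ ≤ 2 * L * ((a i + C) / Δx) + 2 * L * ((a i + C) / Δx) := by
            have h0 : (0:ℝ) ≤ 2 * L := by linarith
            exact add_le_add (mul_le_mul_of_nonneg_left h1 h0) (mul_le_mul_of_nonneg_left h2 h0)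
        _ = 4 * L * ((a i + C) / Δx) := by ring
    have hdiff : ε * Δt * (-2 * C - 2 * a i) / Δx ^ 2
        ≤ ε * Δt * (a (i + 1) - 2 * a i + a (i - 1)) / Δx ^ 2 := by
      apply div_le_div_of_nonneg_right ?_ (by positivity)
      exact mul_le_mul_of_nonneg_left (by linarith) (by positivity)
    have hEq : a i + ε * Δt * (-2 * C - 2 * a i) / Δx ^ 2 - Δt * (4 * L * ((a i + C) / Δx))
        = a i - K * (a i + C) := by
      rw [hK_def]; field_simp; ring
    have hfinal : -C ≤ a i - K * (a i + C) := by
      nlinarith [mul_nonneg (sub_nonneg.2 hCFL) (by linarith : (0:ℝ) ≤ a i + C)]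
    rw [hE]
    linarith
  · -- upper bound: E ≤ C
    have hkey : Hnum pv qv - Hnum pu qu ≤ 2 * L * max (pv - pu) 0 + 2 * L * max (qu - qv) 0 :=
      Hnum_diff_le hL.le hpv hpu hqv hqu
    have h1 : max (pv - pu) 0 ≤ (C - a i) / Δx := by
      apply max_le
      · rw [hpu_def, hpv_def]
        rw [div_sub_div_same, div_le_div_iff₀ hΔx hΔx]
        have : v i - v (i - 1) - (u i - u (i - 1)) = a (i - 1) - a i := by
          simp only [ha_def]; ring
        rw [this]
        nlinarith
      · exact div_nonneg (by linarith) hΔx.le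
    have h2 : max (qu - qv) 0 ≤ (C - a i) / Δx := by
      apply max_le
      · rw [hqu_def, hqv_def]
        rw [div_sub_div_same, div_le_div_iff₀ hΔx hΔx]
        have : u (i + 1) - u i - (v (i + 1) - v i) = a (i + 1) - a i := by
          simp only [ha_def]; ring
        rw [this]
        nlinarith
      · exact div_nonneg (by linarith) hΔx.le
    have hH : -(Δt * (Hnum pu qu - Hnum pv qv)) ≤ Δt * (4 * L * ((C - a i) / Δx)) := by
      rw [neg_mul_eq_mul_neg]
      apply mul_le_mul_of_nonneg_left _ hΔt.le
      calc -(Hnum pu qu - Hnum pv qv) = Hnum pv qv - Hnum pu qu := by ring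
        _ ≤ 2 * L * max (pv - pu) 0 + 2 * L * max (qu - qv) 0 := hkey
        _ ≤ 2 * L * ((C - a i) / Δx) + 2 * L * ((C - a i) / Δx) := by
            have h0 : (0:ℝ) ≤ 2 * L := by linarith
            exact add_le_add (mul_le_mul_of_nonneg_left h1 h0) (mul_le_mul_of_nonneg_left h2 h0)
        _ = 4 * L * ((C - a i) / Δx) := by ring
    have hdiff : ε * Δt * (a (i + 1) - 2 * a i + a (i - 1)) / Δx ^ 2
        ≤ ε * Δt * (2 * C - 2 * a i) / Δx ^ 2 := by
      apply div_le_div_of_nonneg_right ?_ (by positivity)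
      exact mul_le_mul_of_nonneg_left (by linarith) (by positivity)
    have hEq : a i + ε * Δt * (2 * C - 2 * a i) / Δx ^ 2 + Δt * (4 * L * ((C - a i) / Δx))
        = a i + K * (C - a i) := by
      rw [hK_def]; field_simp; ring
    have hfinal : a i + K * (C - a i) ≤ C := by
      nlinarith [mul_nonneg (sub_nonneg.2 hCFL) (by linarith : (0:ℝ) ≤ C - a i)]
    rw [hE]
    linarith
end

section
/- Suppose v : ℤ → ℝ satisfies v_i ≥ a|iΔx| + b for all i with a > 0, and that the scheme (with CFL condition 2εΔt/Δx² + 4L Δt/Δx ≤ 1 and v discrete L-Lipschitz with L ≥ a) produces u_i = M(v)_i − Δt·R_i where R_i ≤ K for all i. Then u_i ≥ a|iΔx| + b − Δt·a² − Δt·K for all i ≠ 0, and u₀ ≥ b − Δt·K. -/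
/-!
The scheme is monotone as long as the middle value does not move faster than the CFL condition
allows: raising `v i` by `d` changes the Hamiltonian term by at most `2 L Δt d / Δx` when the
discrete slopes are bounded by `L`. Hence `M(v) ≥ M(w)` for the cone `w i = a |i Δx| + b ≤ v i`.
On the cone `M` is explicit: away from the vertex both one-sided slopes equal `±a`, the diffusion
vanishes and `H = a²`; at the vertex the slopes are `-a, a`, so `H = 0` and the diffusion is
nonnegative.
-/

lemma Hnum_self (p : ℝ) : Hnum p p = p ^ 2 := by
  rcases le_total 0 p with hp | hp
  · simp [Hnum, hp]
  · simp [Hnum, hp, sq_nonneg]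

lemma Hnum_neg_self {a : ℝ} (ha : 0 ≤ a) : Hnum (-a) a = 0 := by
  simp [Hnum, ha]

lemma Hnum_mono_left {p p' : ℝ} (h : p ≤ p') (q : ℝ) : Hnum p q ≤ Hnum p' q :=
  max_le_max_right _ <| pow_le_pow_left₀ (le_max_right _ _) (max_le_max_right 0 h) 2

lemma Hnum_anti_right (p : ℝ) {q q' : ℝ} (h : q ≤ q') : Hnum p q' ≤ Hnum p q :=
  max_le_max_left _ <| by nlinarith [min_le_min_right 0 h, min_le_right q' 0]

lemma sq_le_sq_add_mul_of_le_add {s t h L : ℝ} (hs : 0 ≤ s) (hst : s ≤ t) (hth : t ≤ s + h)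
    (htL : t ≤ L) : t ^ 2 ≤ s ^ 2 + 2 * L * h := by
  nlinarith

lemma Hnum_add_sub_le {p q h L : ℝ} (hL : 0 ≤ L) (hh : 0 ≤ h) (hp : p + h ≤ L)
    (hq : -L ≤ q - h) : Hnum (p + h) (q - h) ≤ Hnum p q + 2 * L * h := by
  have hpos : max (p + h) 0 ^ 2 ≤ max p 0 ^ 2 + 2 * L * h := by
    apply sq_le_sq_add_mul_of_le_add (le_max_right _ _) (max_le_max_right 0 (by linarith))
      _ (max_le hp hL)
    exact max_le (by linarith [le_max_left p 0]) (by linarith [le_max_right p 0])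
  have hneg : (-min (q - h) 0) ^ 2 ≤ (-min q 0) ^ 2 + 2 * L * h := by
    have hqh : min q 0 - h ≤ min (q - h) 0 :=
      le_min (by linarith [min_le_left q 0]) (by linarith [min_le_right q 0])
    apply sq_le_sq_add_mul_of_le_add (by linarith [min_le_right q 0])
      (neg_le_neg (min_le_min_right 0 (by linarith))) (by linarith)
    linarith [le_min hq (by linarith : -L ≤ 0)]
  rw [neg_sq, neg_sq] at hneg
  exact max_le (hpos.trans (by gcongr; exact le_max_left _ _))
    (hneg.trans (by gcongr; exact le_max_right _ _))

noncomputable def stencil (ε Δt Δx x y z : ℝ) : ℝ :=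
  y + ε * Δt * (z - 2 * y + x) / Δx ^ 2 - Δt * Hnum ((y - x) / Δx) ((z - y) / Δx)

lemma Mop_eq_stencil (ε Δt Δx : ℝ) (u : ℤ → ℝ) (i : ℤ) :
    Mop ε Δt Δx u i = stencil ε Δt Δx (u (i - 1)) (u i) (u (i + 1)) := rfl

lemma nonneg_of_discrete_lipschitz {L Δx : ℝ} (hΔx : 0 < Δx) {v : ℤ → ℝ}
    (hvLip : ∀ i : ℤ, |v i - v (i - 1)| ≤ L * Δx) : 0 ≤ L :=
  nonneg_of_mul_nonneg_left ((abs_nonneg _).trans (hvLip 0)) hΔx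

section Monotone

variable {ε Δt Δx : ℝ}

lemma stencil_mono_left (hε : 0 ≤ ε) (hΔt : 0 ≤ Δt) (hΔx : 0 < Δx) {x x' y z : ℝ}
    (hx : x ≤ x') :
    stencil ε Δt Δx x y z ≤ stencil ε Δt Δx x' y z := by
  have hH : Hnum ((y - x') / Δx) ((z - y) / Δx) ≤ Hnum ((y - x) / Δx) ((z - y) / Δx) :=
    Hnum_mono_left (by gcongr) _
  unfold stencil
  gcongr

lemma stencil_mono_right (hε : 0 ≤ ε) (hΔt : 0 ≤ Δt) (hΔx : 0 < Δx) {x y z z' : ℝ}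
    (hz : z ≤ z') :
    stencil ε Δt Δx x y z ≤ stencil ε Δt Δx x y z' := by
  have hH : Hnum ((y - x) / Δx) ((z' - y) / Δx) ≤ Hnum ((y - x) / Δx) ((z - y) / Δx) :=
    Hnum_anti_right _ (by gcongr)
  unfold stencil
  gcongr

lemma stencil_mono_mid (hΔt : 0 ≤ Δt) (hΔx : 0 < Δx) {L x y y' z : ℝ} (hL : 0 ≤ L)
    (hCFL : 2 * ε * Δt / Δx ^ 2 + 4 * L * Δt / Δx ≤ 1)
    (hy : y ≤ y') (hp : y' - x ≤ L * Δx) (hq : -(L * Δx) ≤ z - y') :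
    stencil ε Δt Δx x y z ≤ stencil ε Δt Δx x y' z := by
  set h := (y' - y) / Δx with h_def
  have hh : 0 ≤ h := div_nonneg (by linarith) hΔx.le
  have hslope_left : (y' - x) / Δx = (y - x) / Δx + h := by rw [h_def]; ring
  have hslope_right : (z - y') / Δx = (z - y) / Δx - h := by rw [h_def]; ring
  have hH : Hnum ((y' - x) / Δx) ((z - y') / Δx)
      ≤ Hnum ((y - x) / Δx) ((z - y) / Δx) + 2 * L * h := by
    rw [hslope_left, hslope_right]
    apply Hnum_add_sub_le hL hh
    · rw [← hslope_left, div_le_iff₀ hΔx]; exact hp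
    · rw [← hslope_right, le_div_iff₀ hΔx]; linarith
  have hCFL' : (2 * ε * Δt / Δx ^ 2 + 2 * L * Δt / Δx) * (y' - y) ≤ y' - y := by
    have : 0 ≤ 2 * L * Δt / Δx := by positivity
    have : 4 * L * Δt / Δx = 2 * (2 * L * Δt / Δx) := by ring
    exact mul_le_of_le_one_left (by linarith) (by linarith)
  have hΔth : Δt * (2 * L * h) = 2 * L * Δt / Δx * (y' - y) := by rw [h_def]; ring
  have := mul_le_mul_of_nonneg_left hH hΔt
  unfold stencil
  linarith [show ε * Δt * (z - 2 * y + x) / Δx ^ 2 - ε * Δt * (z - 2 * y' + x) / Δx ^ 2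
    = 2 * ε * Δt / Δx ^ 2 * (y' - y) by ring]

lemma Mop_mono (hε : 0 ≤ ε) (hΔt : 0 ≤ Δt) (hΔx : 0 < Δx) {L : ℝ}
    (hCFL : 2 * ε * Δt / Δx ^ 2 + 4 * L * Δt / Δx ≤ 1)
    {v w : ℤ → ℝ} (hvLip : ∀ i : ℤ, |v i - v (i - 1)| ≤ L * Δx) (hwv : ∀ i, w i ≤ v i) (i : ℤ) :
    Mop ε Δt Δx w i ≤ Mop ε Δt Δx v i := by
  have hp : v i - v (i - 1) ≤ L * Δx := (abs_le.mp (hvLip i)).2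
  have hq : -(L * Δx) ≤ v (i + 1) - v i := by
    simpa using (abs_le.mp (hvLip (i + 1))).1
  rw [Mop_eq_stencil, Mop_eq_stencil]
  calc _ ≤ stencil ε Δt Δx (v (i - 1)) (w i) (w (i + 1)) := stencil_mono_left hε hΔt hΔx (hwv _)
    _ ≤ stencil ε Δt Δx (v (i - 1)) (w i) (v (i + 1)) := stencil_mono_right hε hΔt hΔx (hwv _)
    _ ≤ _ := stencil_mono_mid hΔt hΔx (nonneg_of_discrete_lipschitz hΔx hvLip) hCFL
      (hwv i) hp hq

end Monotone

lemma stencil_of_slopes {ε Δt Δx x y z p q : ℝ} (hΔx : Δx ≠ 0)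
    (hp : y - x = p * Δx) (hq : z - y = q * Δx) :
    stencil ε Δt Δx x y z = y + ε * Δt * (q - p) / Δx - Δt * Hnum p q := by
  have hxz : z - 2 * y + x = (q - p) * Δx := by linear_combination hq - hp
  rw [stencil, hxz, hp, hq, mul_div_cancel_right₀ _ hΔx, mul_div_cancel_right₀ _ hΔx]
  field_simp

noncomputable def cone (a b Δx : ℝ) (i : ℤ) : ℝ := a * |(i : ℝ) * Δx| + b

section Cone

variable {a b Δx : ℝ} (hΔx : 0 < Δx)
include hΔx

lemma cone_succ_sub_of_nonneg {j : ℤ} (hj : 0 ≤ j) :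
    cone a b Δx (j + 1) - cone a b Δx j = a * Δx := by
  have hj' : (0 : ℝ) ≤ j := by exact_mod_cast hj
  simp only [cone, Int.cast_add, Int.cast_one]
  rw [abs_of_nonneg (by positivity), abs_of_nonneg (by positivity)]
  ring

lemma cone_succ_sub_of_neg {j : ℤ} (hj : j < 0) :
    cone a b Δx (j + 1) - cone a b Δx j = -a * Δx := by
  have hj' : (j : ℝ) + 1 ≤ 0 := by exact_mod_cast hj
  simp only [cone, Int.cast_add, Int.cast_one]
  rw [abs_of_nonpos (mul_nonpos_of_nonpos_of_nonneg hj' hΔx.le),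
    abs_of_nonpos (mul_nonpos_of_nonpos_of_nonneg (by linarith) hΔx.le)]
  ring

lemma Mop_cone_of_ne_zero (ε Δt : ℝ) {i : ℤ} (hi : i ≠ 0) :
    Mop ε Δt Δx (cone a b Δx) i = cone a b Δx i - Δt * a ^ 2 := by
  have key : ∀ s, s ^ 2 = a ^ 2 → (∀ j, i - 1 ≤ j → j ≤ i →
      cone a b Δx (j + 1) - cone a b Δx j = s * Δx) →
      Mop ε Δt Δx (cone a b Δx) i = cone a b Δx i - Δt * a ^ 2 := by
    intro s hs hslope
    rw [Mop_eq_stencil, stencil_of_slopes hΔx.ne' (p := s) (q := s), Hnum_self, hs]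
    · ring
    · simpa using hslope (i - 1) le_rfl (by omega)
    · exact hslope i (by omega) le_rfl
  rcases hi.lt_or_gt with hneg | hpos
  · exact key (-a) (neg_sq a) fun j _ hj => cone_succ_sub_of_neg hΔx (by omega)
  · exact key a rfl fun j hj _ => cone_succ_sub_of_nonneg hΔx (by omega)

lemma le_Mop_cone_zero {ε Δt : ℝ} (ha : 0 ≤ a) (hε : 0 ≤ ε) (hΔt : 0 ≤ Δt) :
    b ≤ Mop ε Δt Δx (cone a b Δx) 0 := by
  have hleft : cone a b Δx 0 - cone a b Δx (0 - 1) = -a * Δx := by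
    simpa using cone_succ_sub_of_neg hΔx (a := a) (b := b) (j := -1) (by norm_num)
  rw [Mop_eq_stencil, stencil_of_slopes hΔx.ne' hleft (cone_succ_sub_of_nonneg hΔx le_rfl),
    Hnum_neg_self ha]
  have : 0 ≤ ε * Δt * (a - -a) / Δx := by
    have : 0 ≤ a - -a := by linarith
    positivity
  simp only [cone, Int.cast_zero, zero_mul, abs_zero, mul_zero, zero_add]
  linarith

end Cone

theorem step_lower_bound_general (a b ε Δt Δx L K : ℝ) (ha : 0 < a) (hε : 0 ≤ ε)
    (hΔt : 0 < Δt) (hΔx : 0 < Δx)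
    (hCFL : 2 * ε * Δt / Δx ^ 2 + 4 * L * Δt / Δx ≤ 1)
    (v : ℤ → ℝ)
    (hvLip : ∀ i : ℤ, |v i - v (i - 1)| ≤ L * Δx)
    (hv : ∀ i : ℤ, a * |(i : ℝ) * Δx| + b ≤ v i)
    (R : ℤ → ℝ) (hR : ∀ i, R i ≤ K)
    (u : ℤ → ℝ) (hu : ∀ i, u i = Mop ε Δt Δx v i - Δt * R i) :
    (∀ i : ℤ, i ≠ 0 → a * |(i : ℝ) * Δx| + b - Δt * a ^ 2 - Δt * K ≤ u i) ∧
    b - Δt * K ≤ u 0 := by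
  have hM : ∀ i, Mop ε Δt Δx (cone a b Δx) i ≤ Mop ε Δt Δx v i :=
    Mop_mono hε hΔt.le hΔx hCFL hvLip hv
  have hRK : ∀ i, Δt * R i ≤ Δt * K := fun i => mul_le_mul_of_nonneg_left (hR i) hΔt.le
  refine ⟨fun i hi => ?_, ?_⟩
  · have hcone := Mop_cone_of_ne_zero hΔx (a := a) (b := b) ε Δt hi
    rw [hu i]
    linarith [hM i, hRK i, show cone a b Δx i = a * |(i : ℝ) * Δx| + b from rfl]
  · rw [hu 0]
    linarith [hM 0, hRK 0, le_Mop_cone_zero hΔx (b := b) ha.le hε hΔt.le]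

/-- linear-growth lower bounds propagated by one step of the scheme. -/
theorem step_lower_bound (a b ε Δt Δx L K : ℝ) (ha : 0 < a) (hε : 0 ≤ ε)
    (hΔt : 0 < Δt) (hΔx : 0 < Δx) (hLa : a ≤ L)
    (hCFL : 2 * ε * Δt / Δx ^ 2 + 4 * L * Δt / Δx ≤ 1)
    (v : ℤ → ℝ)
    (hvLip : ∀ i : ℤ, |v i - v (i - 1)| ≤ L * Δx)
    (hv : ∀ i : ℤ, a * |(i : ℝ) * Δx| + b ≤ v i)
    (R : ℤ → ℝ) (hR : ∀ i, R i ≤ K)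
    (u : ℤ → ℝ) (hu : ∀ i, u i = Mop ε Δt Δx v i - Δt * R i) :
    (∀ i : ℤ, i ≠ 0 → a * |(i : ℝ) * Δx| + b - Δt * a ^ 2 - Δt * K ≤ u i) ∧
    b - Δt * K ≤ u 0 :=
  step_lower_bound_general a b ε Δt Δx L K ha hε hΔt hΔx hCFL v hvLip hv R hR u hu
end

section
/- Suppose v^{n-1}, v^n : ℤ → ℝ with v^{n-1} ≥ 0, and at an index j where v^n_j = 0 = min_i v^n_i one has the scheme relation (v^n_j − v^{n-1}_j)/Δt + H((v^{n-1}_j − v^{n-1}_{j-1})/Δx, (v^{n-1}_{j+1} − v^{n-1}_j)/Δx) + R_j = 0, where H(p,q) = max(max(p,0)², min(q,0)²). If moreover v^{n-1}_j/Δt ≤ L² + K and (Δt/Δx)²(L² + K) ≤ 1, then R_j ≥ 0. -/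
/-- nonnegativity of the constraint term R_j at the argmin. -/
theorem R_nonneg_at_argmin (Δt Δx L K : ℝ) (hΔt : 0 < Δt) (hΔx : 0 < Δx)
    (vprev vcur : ℤ → ℝ) (hprev : ∀ i : ℤ, 0 ≤ vprev i)
    (j : ℤ) (hj : vcur j = 0) (hmin : ∀ i : ℤ, vcur j ≤ vcur i)
    (Rj : ℝ)
    (hscheme : (vcur j - vprev j) / Δt
        + Hnum ((vprev j - vprev (j - 1)) / Δx) ((vprev (j + 1) - vprev j) / Δx)
        + Rj = 0)
    (htime : vprev j / Δt ≤ L ^ 2 + K)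
    (hCFL : (Δt / Δx) * Real.sqrt (L ^ 2 + K) ≤ 1) :
    0 ≤ Rj := by
  set a := vprev j with ha_def
  have ha : 0 ≤ a := hprev j
  have haΔ : 0 ≤ a / Δx := div_nonneg ha hΔx.le
  -- bound the Hamiltonian
  have hp : (vprev j - vprev (j - 1)) / Δx ≤ a / Δx := by
    apply div_le_div_of_nonneg_right _ hΔx.le
    have := hprev (j - 1); linarith
  have hq : -(a / Δx) ≤ (vprev (j + 1) - vprev j) / Δx := by
    rw [← neg_div]
    apply div_le_div_of_nonneg_right _ hΔx.le
    have := hprev (j + 1); linarith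
  have hH : Hnum ((vprev j - vprev (j - 1)) / Δx) ((vprev (j + 1) - vprev j) / Δx)
      ≤ (a / Δx) ^ 2 := by
    unfold Hnum
    apply max_le
    · have h1 : max ((vprev j - vprev (j - 1)) / Δx) 0 ≤ a / Δx := max_le hp haΔ
      have h0 : (0:ℝ) ≤ max ((vprev j - vprev (j - 1)) / Δx) 0 := le_max_right _ _
      nlinarith
    · have h1 : -(a / Δx) ≤ min ((vprev (j + 1) - vprev j) / Δx) 0 :=
        le_min hq (by linarith)
      have h0 : min ((vprev (j + 1) - vprev j) / Δx) 0 ≤ 0 := min_le_right _ _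
      nlinarith
  -- CFL consequences
  have hLK : 0 ≤ L ^ 2 + K := le_trans (div_nonneg ha hΔt.le) htime
  have hsqrt : Real.sqrt (L ^ 2 + K) ^ 2 = L ^ 2 + K := Real.sq_sqrt hLK
  have hsqrt0 : 0 ≤ Real.sqrt (L ^ 2 + K) := Real.sqrt_nonneg _
  have h0 : 0 ≤ Δt / Δx := div_nonneg hΔt.le hΔx.le
  have hCFL2 : (Δt / Δx) ^ 2 * (L ^ 2 + K) ≤ 1 := by
    have h1 : (Δt / Δx * Real.sqrt (L ^ 2 + K)) ^ 2 ≤ 1 := by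
      nlinarith [mul_nonneg h0 hsqrt0]
    calc (Δt / Δx) ^ 2 * (L ^ 2 + K) = (Δt / Δx * Real.sqrt (L ^ 2 + K)) ^ 2 := by
          rw [mul_pow, hsqrt]
      _ ≤ 1 := h1
  have ht : a ≤ (L ^ 2 + K) * Δt := by
    rw [div_le_iff₀ hΔt] at htime; linarith
  -- a * Δt ≤ Δx ^ 2
  have key : a * Δt ≤ Δx ^ 2 := by
    have h1 : (Δt / Δx) ^ 2 = Δt ^ 2 / Δx ^ 2 := by ring
    have h2 : Δt ^ 2 * (L ^ 2 + K) ≤ Δx ^ 2 := by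
      rw [h1, div_mul_eq_mul_div, div_le_one (by positivity : (0:ℝ) < Δx ^ 2)] at hCFL2
      linarith
    nlinarith
  -- (a/Δx)^2 ≤ a/Δt
  have hfin : (a / Δx) ^ 2 ≤ a / Δt := by
    rw [div_pow, div_le_div_iff₀ (by positivity) hΔt]
    nlinarith
  have hRj : Rj = a / Δt
      - Hnum ((vprev j - vprev (j - 1)) / Δx) ((vprev (j + 1) - vprev j) / Δx) := by
    rw [hj] at hscheme
    field_simp at hscheme ⊢
    linarith
  rw [hRj]
  linarith
end

section
/- Let D ⊂ ℝ^N be open, ε, Δt, Δx > 0 and ψ : {1,…,N} → (0,∞). Define S : D → ℝ^N by S(u)_i = u_i + Δt·R(x_i, G(u)) where G(u) = Δx·Σ_j ψ(j)·exp(−u_j/ε), and R is C¹ with −K ≤ ∂_I R ≤ −1/K. Suppose G(u) < I_M' on D and Δt·K·I_M'/ε < 1. Then S is injective on D and its inverse is Lipschitz in the sup norm with constant 1/(1 − Δt·K·I_M'/ε): for u, v ∈ D, ‖u − v‖_∞ ≤ (1/(1 − Δt K I_M'/ε))·‖S(u) − S(v)‖_∞. -/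
/-- the implicit map S(u)_i = u_i + Δt·R(x_i, G(u)), with
G(u) = Δx·Σ_j ψ(j)·exp(−u_j/ε), is injective on D and has a Lipschitz inverse in
the sup norm, provided G < I_M' on D and Δt·K·I_M'/ε < 1. -/
theorem implicit_map_injective_lipschitz_inverse (N : ℕ) (ε Δt Δx K IM' : ℝ)
    (hε : 0 < ε) (hΔt : 0 < Δt) (hΔx : 0 < Δx) (hK : 0 < K)
    (D : Set (Fin N → ℝ)) (hD : IsOpen D)
    (ψ : Fin N → ℝ) (hψ : ∀ j, 0 < ψ j)
    (x : Fin N → ℝ)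
    (R : ℝ → ℝ → ℝ) (R' : ℝ → ℝ → ℝ)
    (hRderiv : ∀ y I : ℝ, HasDerivAt (R y) (R' y I) I)
    (hRcont : ∀ y : ℝ, Continuous (R' y))
    (hR'bounds : ∀ y I : ℝ, -K ≤ R' y I ∧ R' y I ≤ -(1 / K))
    (hG : ∀ u ∈ D, Δx * ∑ j : Fin N, ψ j * Real.exp (-u j / ε) < IM')
    (hsmall : Δt * K * IM' / ε < 1) :
    Set.InjOn (fun u : Fin N → ℝ =>
        fun i => u i + Δt * R (x i) (Δx * ∑ j : Fin N, ψ j * Real.exp (-u j / ε))) D ∧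
    ∀ u ∈ D, ∀ v ∈ D,
      ‖u - v‖ ≤ (1 / (1 - Δt * K * IM' / ε)) *
        ‖(fun i => u i + Δt * R (x i) (Δx * ∑ j : Fin N, ψ j * Real.exp (-u j / ε)))
          - (fun i => v i + Δt * R (x i) (Δx * ∑ j : Fin N, ψ j * Real.exp (-v j / ε)))‖ := by
  set G : (Fin N → ℝ) → ℝ := fun u => Δx * ∑ j : Fin N, ψ j * Real.exp (-u j / ε) with hGdef
  set S : (Fin N → ℝ) → (Fin N → ℝ) :=
    fun u => fun i => u i + Δt * R (x i) (G u) with hSdef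
  have hc1 : 0 < 1 - Δt * K * IM' / ε := by linarith
  -- G is nonnegative
  have hGnonneg : ∀ u : Fin N → ℝ, 0 ≤ G u := by
    intro u
    apply mul_nonneg hΔx.le
    apply Finset.sum_nonneg
    intro j _
    exact mul_nonneg (hψ j).le (Real.exp_pos _).le
  -- R is antitone in its second argument
  have hRanti : ∀ y : ℝ, Antitone (R y) := by
    intro y
    apply antitone_of_deriv_nonpos
    · exact fun t => (hRderiv y t).differentiableAt
    · intro t
      rw [(hRderiv y t).deriv]
      have h1 : (0:ℝ) < 1 / K := by positivity
      linarith [(hR'bounds y t).2]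
  -- lower Lipschitz bound: R y B - R y A ≤ K * (A - B) for B ≤ A
  have hRlip : ∀ y A B : ℝ, B ≤ A → R y B - R y A ≤ K * (A - B) := by
    intro y A B hBA
    have hmono : Monotone (fun t => R y t + K * t) := by
      apply monotone_of_deriv_nonneg
      · exact fun t => ((hRderiv y t).differentiableAt).add
          ((differentiable_id.const_mul K) t)
      · intro t
        have : HasDerivAt (fun t => R y t + K * t) (R' y t + K) t :=
          (hRderiv y t).add ((hasDerivAt_id t).const_mul K |>.congr_deriv (by ring))
        rw [this.deriv]
        linarith [(hR'bounds y t).1]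
    have := hmono hBA
    simp only at this
    linarith
  -- key pointwise estimate on G differences
  have hGdiff : ∀ u ∈ D, ∀ v : Fin N → ℝ, G u - G v ≤ (‖u - v‖ / ε) * IM' := by
    intro u hu v
    have hGu : G u < IM' := hG u hu
    have hbound : ∀ j : Fin N,
        ψ j * Real.exp (-u j / ε) - ψ j * Real.exp (-v j / ε)
          ≤ (‖u - v‖ / ε) * (ψ j * Real.exp (-u j / ε)) := by
      intro j
      have h1 : v j - u j ≤ ‖u - v‖ := by
        have := norm_le_pi_norm (u - v) j
        have h2 : |u j - v j| ≤ ‖u - v‖ := by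
          simpa [Pi.sub_apply, Real.norm_eq_abs] using this
        have := abs_le.mp h2
        linarith [this.1]
      -- exp(-u/ε) - exp(-v/ε) ≤ ((v-u)/ε) exp(-u/ε)
      have hexp : Real.exp (-u j / ε) - Real.exp (-v j / ε)
          ≤ ((v j - u j) / ε) * Real.exp (-u j / ε) := by
        have ht : ∀ t : ℝ, 1 - Real.exp (-t) ≤ t := by
          intro t
          have := Real.add_one_le_exp (-t)
          linarith
        have := ht ((v j - u j) / ε)
        have hE : Real.exp (-v j / ε) = Real.exp (-u j / ε) * Real.exp (-((v j - u j)/ε)) := by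
          rw [← Real.exp_add]; congr 1; field_simp; ring
        have hpos := (Real.exp_pos (-u j / ε))
        calc Real.exp (-u j / ε) - Real.exp (-v j / ε)
            = Real.exp (-u j / ε) * (1 - Real.exp (-((v j - u j)/ε))) := by rw [hE]; ring
          _ ≤ Real.exp (-u j / ε) * ((v j - u j) / ε) := by
              exact mul_le_mul_of_nonneg_left this hpos.le
          _ = ((v j - u j) / ε) * Real.exp (-u j / ε) := by ring
      have hψj := (hψ j).le
      have hpos := (Real.exp_pos (-u j / ε)).le
      have h3 : ((v j - u j) / ε) * Real.exp (-u j / ε)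
          ≤ (‖u - v‖ / ε) * Real.exp (-u j / ε) := by
        apply mul_le_mul_of_nonneg_right _ hpos
        exact div_le_div_of_nonneg_right h1 hε.le |>.trans_eq rfl
      nlinarith [mul_le_mul_of_nonneg_left (hexp.trans h3) hψj]
    have hsum : (∑ j : Fin N, ψ j * Real.exp (-u j / ε))
        - (∑ j : Fin N, ψ j * Real.exp (-v j / ε))
        ≤ (‖u - v‖ / ε) * ∑ j : Fin N, ψ j * Real.exp (-u j / ε) := by
      rw [← Finset.sum_sub_distrib, Finset.mul_sum]
      exact Finset.sum_le_sum fun j _ => hbound j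
    have hd0 : 0 ≤ ‖u - v‖ / ε := div_nonneg (norm_nonneg _) hε.le
    have : G u - G v ≤ (‖u - v‖ / ε) * G u := by
      simp only [hGdef, ← mul_sub]
      calc Δx * ((∑ j : Fin N, ψ j * Real.exp (-u j / ε))
            - ∑ j : Fin N, ψ j * Real.exp (-v j / ε))
          ≤ Δx * ((‖u - v‖ / ε) * ∑ j : Fin N, ψ j * Real.exp (-u j / ε)) :=
            mul_le_mul_of_nonneg_left hsum hΔx.le
        _ = (‖u - v‖ / ε) * (Δx * ∑ j : Fin N, ψ j * Real.exp (-u j / ε)) := by ring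
    refine this.trans ?_
    exact mul_le_mul_of_nonneg_left hGu.le hd0
  -- the key inequality, oriented version
  have key : ∀ u ∈ D, ∀ v ∈ D, ∀ i : Fin N, u i - v i = ‖u - v‖ →
      (1 - Δt * K * IM' / ε) * ‖u - v‖ ≤ ‖S u - S v‖ := by
    intro u hu v hv i hi
    have hIM : 0 < IM' := lt_of_le_of_lt (hGnonneg u) (hG u hu)
    set d := ‖u - v‖ with hd
    have hd0 : 0 ≤ d := norm_nonneg _
    have hRterm : -(K * (d / ε) * IM') ≤ R (x i) (G u) - R (x i) (G v) := by
      rcases le_or_gt (G u) (G v) with h | h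
      · have h1 : 0 ≤ R (x i) (G u) - R (x i) (G v) := by
          have := hRanti (x i) h
          linarith
        have h2 : 0 ≤ K * (d / ε) * IM' := by positivity
        linarith
      · have h1 : G u - G v ≤ (d / ε) * IM' := hGdiff u hu v
        have h2 := hRlip (x i) (G u) (G v) h.le
        have h3 : K * (G u - G v) ≤ K * ((d / ε) * IM') :=
          mul_le_mul_of_nonneg_left h1 hK.le
        nlinarith
    have hSi : (1 - Δt * K * IM' / ε) * d ≤ (S u - S v) i := by
      have : (S u - S v) i = (u i - v i) + Δt * (R (x i) (G u) - R (x i) (G v)) := by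
        simp only [hSdef, Pi.sub_apply]; ring
      rw [this, hi]
      have := mul_le_mul_of_nonneg_left hRterm hΔt.le
      have heq : Δt * (K * (d / ε) * IM') = (Δt * K * IM' / ε) * d := by ring
      nlinarith
    have hle : (S u - S v) i ≤ ‖S u - S v‖ := by
      have := norm_le_pi_norm (S u - S v) i
      have h2 : |(S u - S v) i| ≤ ‖S u - S v‖ := by
        simpa [Real.norm_eq_abs] using this
      exact (le_abs_self _).trans h2
    linarith
  -- symmetric version
  have key2 : ∀ u ∈ D, ∀ v ∈ D,
      (1 - Δt * K * IM' / ε) * ‖u - v‖ ≤ ‖S u - S v‖ := by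
    intro u hu v hv
    rcases Nat.eq_zero_or_pos N with hN | hN
    · have : ‖u - v‖ = 0 := by
        have : u - v = 0 := by
          funext j; exact absurd (j.2.trans_eq hN) (Nat.not_lt_zero _)
        rw [this, norm_zero]
      rw [this, mul_zero]
      exact norm_nonneg _
    · -- find index attaining the sup norm
      obtain ⟨i, _, hi⟩ := Finset.exists_mem_eq_sup (Finset.univ : Finset (Fin N))
        (Finset.univ_nonempty_iff.mpr (Fin.pos_iff_nonempty.mp hN))
        (fun j => ‖(u - v) j‖₊)
      have hnorm : ‖u - v‖ = |u i - v i| := by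
        have h1 : ‖u - v‖₊ = ‖(u - v) i‖₊ := by
          rw [Pi.nnnorm_def]; exact hi
        have : ‖u - v‖ = ‖(u - v) i‖ := congrArg NNReal.toReal h1
        simpa [Pi.sub_apply, Real.norm_eq_abs] using this
      rcases le_or_gt (v i) (u i) with h | h
      · exact key u hu v hv i (by rw [hnorm, abs_of_nonneg (by linarith)])
      · have h1 : v i - u i = ‖v - u‖ := by
          rw [show ‖v - u‖ = ‖u - v‖ from norm_sub_rev v u, hnorm,
            abs_of_nonpos (by linarith)]; ring
        have := key v hv u hu i h1
        rw [norm_sub_rev v u, norm_sub_rev (S v) (S u)] at this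
        exact this
  constructor
  · intro u hu v hv huv
    have := key2 u hu v hv
    have hSuv : S u - S v = 0 := by
      simp only [hSdef, hGdef]
      rw [sub_eq_zero]
      exact huv
    rw [hSuv, norm_zero] at this
    have : ‖u - v‖ ≤ 0 := by nlinarith
    have := le_antisymm this (norm_nonneg _)
    rwa [norm_sub_eq_zero_iff] at this
  · intro u hu v hv
    have := key2 u hu v hv
    rw [div_mul_eq_mul_div, one_mul, le_div_iff₀ hc1, mul_comm]
    exact this
end
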